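/- The set of norm-continuous representations of a compact group on a Banach space is locally an analytic retract of the ambient Banach space (the key content of its being a real-analytic Banach submanifold): let G be a compact topological group, E a complex Banach space, and R ⊆ C(G, L(E)) the set of norm-continuous representations of G on E. Then for every ρ ∈ R there exist an open neighborhood 𝒰 of ρ in C(G, L(E)) and a map r : 𝒰 → C(G, L(E)), analytic on 𝒰 as a map between real Banach spaces, such that r(f) ∈ R for every f ∈ 𝒰 and r(f) = f for every f ∈ R ∩ 𝒰. -/

import Mathlib

/-- A continuous map `f : C(G, E →L[ℂ] E)` "is a norm-continuous representation of `G`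
on the Banach space `E`": it is valued in invertible operators, unital and
multiplicative. -/
def IsBanachRep {G : Type*} [Group G] [TopologicalSpace G]
    {E : Type*} [NormedAddCommGroup E] [NormedSpace ℂ E]
    (f : C(G, E →L[ℂ] E)) : Prop :=
  (∀ g : G, IsUnit (f g)) ∧ f 1 = 1 ∧ ∀ g h : G, f (g * h) = f g * f h

/-!
For a representation `ρ` of the compact group `G`, the Haar average `T f = ∫ f g * ρ g⁻¹ dg` is a
continuous real-linear function of `f` with `T ρ = 1`, and left invariance of Haar measure gives
`T f * ρ h = f h * T f` whenever `f` is multiplicative. On the open set of `f` with `T f`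
invertible, `r f = T f * ρ * (T f)⁻¹` is therefore a representation, equal to `f` when `f` already
is one, and it is analytic because inversion is analytic on the units of a Banach algebra.
-/

open MeasureTheory

namespace ContinuousMap

section ConjBy

variable {X A : Type*} [TopologicalSpace X] [NormedRing A]

noncomputable def conjBy (a : A) (f : C(X, A)) : C(X, A) :=
  const X a * f * const X (Ring.inverse a)

@[simp]
lemma conjBy_apply (a : A) (f : C(X, A)) (x : X) :
    conjBy a f x = a * f x * Ring.inverse a :=
  rfl

lemma conjBy_eq_of_mul_eq {a : A} (ha : IsUnit a) {f g : C(X, A)}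
    (h : ∀ x, a * f x = g x * a) : conjBy a f = g := by
  ext x
  rw [conjBy_apply, h, mul_assoc, Ring.mul_inverse_cancel a ha, mul_one]

lemma analyticAt_conjBy [CompactSpace X] {𝕜 : Type*} [NontriviallyNormedField 𝕜]
    [NormedAlgebra 𝕜 A] [HasSummableGeomSeries A] (f : C(X, A)) {a : A} (ha : IsUnit a) :
    AnalyticAt 𝕜 (fun b : A => conjBy b f) a := by
  have hconst : ∀ c : A, AnalyticAt 𝕜 (ContinuousLinearMap.const 𝕜 X (M := A)) c :=
    fun c => (ContinuousLinearMap.const 𝕜 X).analyticAt c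
  have hinv : AnalyticAt 𝕜 Ring.inverse a := ha.unit_spec ▸ analyticAt_inverse ha.unit
  exact ((hconst a).mul analyticAt_const).mul ((hconst _).comp hinv)

end ConjBy

section Integral

variable {X E : Type*} [TopologicalSpace X] [CompactSpace X] [MeasurableSpace X]
  [OpensMeasurableSpace X] [NormedAddCommGroup E] (μ : Measure X) [IsFiniteMeasure μ]

lemma integrable (f : C(X, E)) : Integrable f μ :=
  f.continuous.integrable_of_hasCompactSupport (.of_compactSpace _)

variable [NormedSpace ℝ E]

noncomputable def integralCLM : C(X, E) →L[ℝ] E :=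
  LinearMap.mkContinuous
    { toFun := fun f => ∫ x, f x ∂μ
      map_add' := fun f g => integral_add (f.integrable μ) (g.integrable μ)
      map_smul' := fun c f => integral_smul c f }
    (μ.real Set.univ)
    fun f => by
      simpa [mul_comm] using norm_integral_le_of_norm_le_const (.of_forall f.norm_coe_le_norm)

end Integral

end ContinuousMap

lemma MeasureTheory.Measure.isProbabilityMeasure_haarMeasure_top {G : Type*} [Group G]
    [TopologicalSpace G] [IsTopologicalGroup G] [CompactSpace G] [MeasurableSpace G]
    [BorelSpace G] : IsProbabilityMeasure (haarMeasure (⊤ : TopologicalSpace.PositiveCompacts G)) :=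
  ⟨by simpa using haarMeasure_self (K₀ := (⊤ : TopologicalSpace.PositiveCompacts G))⟩

section Intertwiner

open ContinuousMap

variable {G A : Type*} [Group G] [TopologicalSpace G] [ContinuousInv G] [CompactSpace G]
  [MeasurableSpace G] [OpensMeasurableSpace G] [NormedRing A] [NormedAlgebra ℝ A]

noncomputable def averagedIntertwiner (μ : Measure G) [IsFiniteMeasure μ]
    (ρ : C(G, A)) : C(G, A) →L[ℝ] A :=
  integralCLM μ ∘L (ContinuousLinearMap.mul ℝ C(G, A)).flip (ρ.comp ⟨(·⁻¹), continuous_inv⟩)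

variable (μ : Measure G) [IsFiniteMeasure μ] {ρ : C(G, A)}

lemma averagedIntertwiner_apply (f : C(G, A)) :
    averagedIntertwiner μ ρ f = ∫ g, f g * ρ g⁻¹ ∂μ :=
  rfl

lemma averagedIntertwiner_self [CompleteSpace A] [IsProbabilityMeasure μ] (hρ₁ : ρ 1 = 1)
    (hρ : ∀ g h, ρ (g * h) = ρ g * ρ h) : averagedIntertwiner μ ρ ρ = 1 := by
  simp [averagedIntertwiner_apply, ← hρ, hρ₁]

lemma averagedIntertwiner_mul [CompleteSpace A] [MeasurableMul G] [μ.IsMulLeftInvariant]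
    {f : C(G, A)} (hf : ∀ g h, f (g * h) = f g * f h) (hρ : ∀ g h, ρ (g * h) = ρ g * ρ h)
    (h : G) : averagedIntertwiner μ ρ f * ρ h = f h * averagedIntertwiner μ ρ f := by
  have hint : Integrable (fun g => f g * ρ g⁻¹) μ :=
    (f * ρ.comp ⟨(·⁻¹), continuous_inv⟩).integrable μ
  calc averagedIntertwiner μ ρ f * ρ h = ∫ g, f g * ρ g⁻¹ * ρ h ∂μ :=
        (((ContinuousLinearMap.mul ℝ A).flip (ρ h)).integral_comp_comm hint).symm
    _ = ∫ g, f (h * g) * ρ (h * g)⁻¹ * ρ h ∂μ :=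
        (integral_mul_left_eq_self (fun g => f g * ρ g⁻¹ * ρ h) h).symm
    _ = ∫ g, f h * (f g * ρ g⁻¹) ∂μ := by
        simp only [hf, mul_inv_rev, mul_assoc, ← hρ, inv_mul_cancel, mul_one]
    _ = f h * averagedIntertwiner μ ρ f :=
        (ContinuousLinearMap.mul ℝ A (f h)).integral_comp_comm hint

end Intertwiner

lemma IsBanachRep.conjBy {G E : Type*} [Group G] [TopologicalSpace G] [NormedAddCommGroup E]
    [NormedSpace ℂ E] {ρ : C(G, E →L[ℂ] E)} (hρ : IsBanachRep ρ) {a : E →L[ℂ] E} (ha : IsUnit a) :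
    IsBanachRep (ρ.conjBy a) := by
  obtain ⟨u, rfl⟩ := ha
  refine ⟨fun g => ?_, ?_, fun g h => ?_⟩
  · simpa using (u.isUnit.mul (hρ.1 g)).mul u⁻¹.isUnit
  · simp [hρ.2.1]
  · simp [hρ.2.2, mul_assoc]

/-- **Norm-continuous Banach-space representations form a locally analytically
retractible subset** of `C(G, L(E))` (the key content of being a real-analytic Banach
submanifold): every norm-continuous representation `ρ` of the compact group `G` on the
complex Banach space `E` has an open neighborhood `𝒰` in `C(G, E →L[ℂ] E)` carrying a
real-analytic map `r : 𝒰 → C(G, E →L[ℂ] E)` taking values in the set `R` of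
norm-continuous representations and restricting to the identity on `R ∩ 𝒰`. -/
theorem rep_banach_locally_analytic_retract
    {G : Type*} [Group G] [TopologicalSpace G] [IsTopologicalGroup G] [CompactSpace G]
    {E : Type*} [NormedAddCommGroup E] [NormedSpace ℂ E] [CompleteSpace E]
    (ρ : C(G, E →L[ℂ] E)) (hρ : IsBanachRep ρ) :
    ∃ 𝒰 : Set C(G, E →L[ℂ] E), IsOpen 𝒰 ∧ ρ ∈ 𝒰 ∧
      ∃ r : C(G, E →L[ℂ] E) → C(G, E →L[ℂ] E),
        AnalyticOn ℝ r 𝒰 ∧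
        (∀ f ∈ 𝒰, IsBanachRep (r f)) ∧
        (∀ f ∈ {f : C(G, E →L[ℂ] E) | IsBanachRep f} ∩ 𝒰, r f = f) := by
  borelize G
  let μ := Measure.haarMeasure (⊤ : TopologicalSpace.PositiveCompacts G)
  have : IsProbabilityMeasure μ := Measure.isProbabilityMeasure_haarMeasure_top
  let T := averagedIntertwiner μ ρ
  refine ⟨T ⁻¹' {a | IsUnit a}, Units.isOpen.preimage T.continuous, ?_,
    fun f => ContinuousMap.conjBy (T f) ρ, ?_, ?_, ?_⟩
  · exact (averagedIntertwiner_self μ hρ.2.1 hρ.2.2 ▸ isUnit_one : IsUnit (T ρ))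
  · exact AnalyticOnNhd.analyticOn fun f hf =>
      (ContinuousMap.analyticAt_conjBy ρ hf).comp (T.analyticAt f)
  · exact fun f hf => hρ.conjBy hf
  · rintro f ⟨hf, hfU⟩
    exact ContinuousMap.conjBy_eq_of_mul_eq hfU (averagedIntertwiner_mul μ hf.2.2 hρ.2.2)
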